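/- Let n ≥ 1 and k ≥ 1 be natural numbers. Averaging over all permutations σ of an n-element set, the k-th moment of the number of fixed points satisfies (1/n!) · ∑_{σ ∈ Sym(n)} (fix σ)^k = ∑_{m=1}^{min(k,n)} S(k,m) / m!, where fix σ denotes the number of fixed points of σ. Equivalently, ∑_{σ ∈ Sym(n)} (fix σ)^k = n! · ∑_{m=1}^{min(k,n)} S(k,m)/m!. In particular, for k ≤ n this average equals the k-th Bell number ∑_{m=1}^{k} S(k,m)/m!. -/
import Mathlib


open Finset

/-- `S k m` is the number of surjections from a `k`-element set onto an `m`-element set. -/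
noncomputable def surjCount (k m : ℕ) : ℕ :=
  Nat.card {f : Fin k → Fin m // Function.Surjective f}

/-- The number of fixed points of a permutation of `Fin n`. -/
def fixCount {n : ℕ} (σ : Equiv.Perm (Fin n)) : ℕ :=
  (Finset.univ.filter fun i => σ i = i).card

lemma perm_fix_card {n : ℕ} (A : Finset (Fin n)) :
    (Finset.univ.filter fun σ : Equiv.Perm (Fin n) => ∀ x ∈ A, σ x = x).card
      = (n - A.card).factorial := by
  rw [← Fintype.card_subtype]
  have e : Equiv.Perm {x : Fin n // x ∉ A} ≃ {σ : Equiv.Perm (Fin n) // ∀ x ∈ A, σ x = x} :=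
    (Equiv.Perm.subtypeEquivSubtypePerm (fun x => x ∉ A)).trans
      (Equiv.subtypeEquivRight (fun σ => by simp [not_not]))
  rw [← Fintype.card_congr e, Fintype.card_perm, Fintype.card_subtype_compl,
    Fintype.card_fin, Fintype.card_coe]

lemma mem_of_image_eq {n k : ℕ} {T : Finset (Fin n)} {f : Fin k → Fin n}
    (hf : Finset.image f Finset.univ = T) (j : Fin k) : f j ∈ T :=
  hf ▸ Finset.mem_image_of_mem f (mem_univ j)

lemma fiber_card {n k : ℕ} (T : Finset (Fin n)) :
    (Finset.univ.filter fun f : Fin k → Fin n => Finset.image f Finset.univ = T).card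
      = surjCount k T.card := by
  rw [← Fintype.card_subtype, surjCount, Nat.card_eq_fintype_card]
  apply Fintype.card_congr
  have e : {x : Fin n // x ∈ T} ≃ Fin T.card :=
    (Fintype.equivFinOfCardEq (Fintype.card_coe T))
  refine
  { toFun := fun f => ⟨fun j => e ⟨f.1 j, mem_of_image_eq f.2 j⟩, ?_⟩
    invFun := fun g => ⟨fun j => (e.symm (g.1 j) : Fin n), ?_⟩
    left_inv := ?_
    right_inv := ?_ }
  · intro y
    have hy : (e.symm y : Fin n) ∈ Finset.image f.1 Finset.univ := by
      rw [f.2]; exact (e.symm y).2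
    obtain ⟨j, -, hj⟩ := Finset.mem_image.1 hy
    exact ⟨j, (congrArg e (Subtype.ext hj)).trans (Equiv.apply_symm_apply e y)⟩
  · apply Finset.Subset.antisymm
    · intro x hx
      obtain ⟨j, -, hj⟩ := Finset.mem_image.1 hx
      rw [← hj]; exact (e.symm (g.1 j)).2
    · intro x hx
      obtain ⟨j, hj⟩ := g.2 (e ⟨x, hx⟩)
      refine Finset.mem_image.2 ⟨j, mem_univ j, ?_⟩
      rw [hj, Equiv.symm_apply_apply]
  · rintro ⟨f, hf⟩
    ext j
    simp
  · rintro ⟨g, hg⟩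
    ext j
    simp

lemma surjCount_zero {k : ℕ} (hk : 1 ≤ k) : surjCount k 0 = 0 := by
  have : IsEmpty {f : Fin k → Fin 0 // Function.Surjective f} :=
    ⟨fun f => (f.1 ⟨0, hk⟩).elim0⟩
  exact Nat.card_of_isEmpty

lemma surjCount_of_lt {k m : ℕ} (h : k < m) : surjCount k m = 0 := by
  have : IsEmpty {f : Fin k → Fin m // Function.Surjective f} := by
    refine ⟨fun f => absurd (Fintype.card_le_of_surjective f.1 f.2) ?_⟩
    simpa using h
  exact Nat.card_of_isEmpty

lemma moments_key (n k : ℕ) :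
    ∑ σ : Equiv.Perm (Fin n), fixCount σ ^ k
      = ∑ m ∈ range (n + 1), n.choose m * (surjCount k m * (n - m).factorial) := by
  have step1 : ∀ σ : Equiv.Perm (Fin n), fixCount σ ^ k
      = (Finset.univ.filter fun f : Fin k → Fin n => ∀ j, σ (f j) = f j).card := by
    intro σ
    have : (Finset.univ.filter fun f : Fin k → Fin n => ∀ j, σ (f j) = f j)
        = Fintype.piFinset (fun _ : Fin k => Finset.univ.filter fun i => σ i = i) := by
      ext f
      simp [Fintype.mem_piFinset]
    rw [this, Fintype.card_piFinset, fixCount]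
    simp [Finset.prod_const, Finset.card_univ]
  calc ∑ σ : Equiv.Perm (Fin n), fixCount σ ^ k
      = ∑ σ : Equiv.Perm (Fin n), ∑ f : Fin k → Fin n,
          if ∀ j, σ (f j) = f j then 1 else 0 := by
        refine Finset.sum_congr rfl fun σ _ => ?_
        rw [step1 σ, Finset.card_filter]
    _ = ∑ f : Fin k → Fin n, ∑ σ : Equiv.Perm (Fin n),
          if ∀ j, σ (f j) = f j then 1 else 0 := Finset.sum_comm
    _ = ∑ f : Fin k → Fin n, (n - (Finset.image f Finset.univ).card).factorial := by
        refine Finset.sum_congr rfl fun f _ => ?_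
        rw [← perm_fix_card (Finset.image f Finset.univ), Finset.card_filter]
        refine Finset.sum_congr rfl fun σ _ => ?_
        congr 1
        simp only [eq_iff_iff]
        constructor
        · intro h x hx
          obtain ⟨j, -, rfl⟩ := Finset.mem_image.1 hx
          exact h j
        · intro h j
          exact h _ (Finset.mem_image_of_mem f (mem_univ j))
    _ = ∑ T : Finset (Fin n), ∑ f ∈ Finset.univ.filter
          (fun f : Fin k → Fin n => Finset.image f Finset.univ = T),
          (n - (Finset.image f Finset.univ).card).factorial :=
        (Finset.sum_fiberwise _ _ _).symm
    _ = ∑ T : Finset (Fin n), surjCount k T.card * (n - T.card).factorial := by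
        refine Finset.sum_congr rfl fun T _ => ?_
        rw [Finset.sum_congr rfl (fun f hf => by
          rw [(Finset.mem_filter.1 hf).2]), Finset.sum_const, ← fiber_card T, smul_eq_mul]
    _ = ∑ m ∈ range (n + 1), n.choose m * (surjCount k m * (n - m).factorial) := by
        rw [← Finset.powerset_univ, Finset.sum_powerset]
        rw [Finset.card_univ, Fintype.card_fin]
        refine Finset.sum_congr rfl fun m _ => ?_
        rw [Finset.sum_congr rfl (fun T hT => by
          rw [(Finset.mem_powersetCard.1 hT).2]), Finset.sum_const, smul_eq_mul,
          Finset.card_powersetCard, Finset.card_univ, Fintype.card_fin]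

theorem matching_moments (n k : ℕ) (hn : 1 ≤ n) (hk : 1 ≤ k) :
    ((1 : ℝ) / Nat.factorial n) * (∑ σ : Equiv.Perm (Fin n), (fixCount σ : ℝ) ^ k) =
        (∑ m ∈ Finset.Icc 1 (min k n), (surjCount k m : ℝ) / Nat.factorial m) ∧
      (∑ σ : Equiv.Perm (Fin n), (fixCount σ : ℝ) ^ k) =
        (Nat.factorial n : ℝ) *
          ∑ m ∈ Finset.Icc 1 (min k n), (surjCount k m : ℝ) / Nat.factorial m ∧
      (k ≤ n →
        ((1 : ℝ) / Nat.factorial n) * (∑ σ : Equiv.Perm (Fin n), (fixCount σ : ℝ) ^ k) =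
          ∑ m ∈ Finset.Icc 1 k, (surjCount k m : ℝ) / Nat.factorial m) := by
  have hnf : (Nat.factorial n : ℝ) ≠ 0 := Nat.cast_ne_zero.2 (Nat.factorial_ne_zero n)
  have eq2 : (∑ σ : Equiv.Perm (Fin n), (fixCount σ : ℝ) ^ k) =
      (Nat.factorial n : ℝ) *
        ∑ m ∈ Finset.Icc 1 (min k n), (surjCount k m : ℝ) / Nat.factorial m := by
    have hcast : (∑ σ : Equiv.Perm (Fin n), (fixCount σ : ℝ) ^ k)
        = ((∑ σ : Equiv.Perm (Fin n), fixCount σ ^ k : ℕ) : ℝ) := by push_cast; rfl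
    rw [hcast, moments_key n k, Finset.mul_sum]
    push_cast
    rw [← Finset.sum_subset (s₁ := Finset.Icc 1 (min k n)) (s₂ := range (n + 1))]
    · refine Finset.sum_congr rfl fun m hm => ?_
      obtain ⟨hm1, hm2⟩ := Finset.mem_Icc.1 hm
      have hmn : m ≤ n := le_trans hm2 (min_le_right k n)
      have hmf : (Nat.factorial m : ℝ) ≠ 0 := Nat.cast_ne_zero.2 (Nat.factorial_ne_zero m)
      have h : ((n.choose m : ℕ) : ℝ) * (Nat.factorial m : ℝ) * (Nat.factorial (n - m) : ℝ)
          = (Nat.factorial n : ℝ) := by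
        exact_mod_cast congrArg (Nat.cast : ℕ → ℝ) (Nat.choose_mul_factorial_mul_factorial hmn)
      field_simp
      linear_combination (surjCount k m : ℝ) * h
    · intro m hm
      simp only [Finset.mem_Icc, le_min_iff, Finset.mem_range] at *
      omega
    · intro m hm hm'
      simp only [Finset.mem_Icc, Finset.mem_range, not_and_or, not_le] at hm hm'
      have : surjCount k m = 0 := by
        rcases hm' with h | h
        · have : m = 0 := by omega
          rw [this]; exact surjCount_zero hk
        · have : k < m := by omega
          exact surjCount_of_lt this
      simp [this]
  have eq1 : ((1 : ℝ) / Nat.factorial n) * (∑ σ : Equiv.Perm (Fin n), (fixCount σ : ℝ) ^ k) =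
      ∑ m ∈ Finset.Icc 1 (min k n), (surjCount k m : ℝ) / Nat.factorial m := by
    rw [eq2, one_div, inv_mul_cancel_left₀ hnf]
  exact ⟨eq1, eq2, fun hkn => by rw [eq1, min_eq_left hkn]⟩
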